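/- Let φ be an oracle for a point x in an effective topology (B, ν) with a recursively enumerable subset relation. Then there exists a complete oracle ψ for x in (B, ν) that is recursive relative to φ, uniformly in φ. -/

import Mathlib

/-- Cantor's pairing function `⟨x,y⟩ = (x² + 2xy + y² + 3x + y)/2`. -/
def cantorPair (x y : ℕ) : ℕ := (x * x + 2 * x * y + y * y + 3 * x + y) / 2

/-- Partial functions `ℕ →. ℕ` that are computable uniformly relative to an oracle:
`PartrecIn F` says that the functional `O ↦ F O` is computed by a single oracle machine,
so that `F O` is partial recursive relative to `O`, uniformly in the oracle `O`. -/
inductive PartrecIn : ((ℕ →. ℕ) → ℕ →. ℕ) → Prop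
  | oracle : PartrecIn fun O => O
  | zero : PartrecIn fun _ => pure 0
  | succ : PartrecIn fun _ => ↑Nat.succ
  | left : PartrecIn fun _ => ↑fun n : ℕ => n.unpair.1
  | right : PartrecIn fun _ => ↑fun n : ℕ => n.unpair.2
  | pair {F G} : PartrecIn F → PartrecIn G →
      PartrecIn fun O n => Nat.pair <$> F O n <*> G O n
  | comp {F G} : PartrecIn F → PartrecIn G →
      PartrecIn fun O n => G O n >>= F O
  | prec {F G} : PartrecIn F → PartrecIn G →
      PartrecIn fun O => Nat.unpaired fun a n =>
        n.rec (F O a) fun y IH => do let i ← IH; G O (Nat.pair a (Nat.pair y i))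
  | rfind {F} : PartrecIn F →
      PartrecIn fun O a => Nat.rfind fun n => (fun m => m = 0) <$> F O (Nat.pair a n)

/-- `L` is a local basis for the point `x` with respect to the basis `Bas`. -/
def IsLocalBasis {X : Type*} (Bas : Set (Set X)) (L : Set (Set X)) (x : X) : Prop :=
  L ⊆ Bas ∧ (∀ l ∈ L, x ∈ l) ∧ ∀ b ∈ Bas, x ∈ b → ∃ l ∈ L, l ⊆ b

/-- `φ : ℕ → dom` is an oracle for the point `x` in the effective topology whose basis
is coded by `code` on the domain `dom`: the image under `code` of the range of `φ`
is a local basis for `x`. -/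
def IsOracleFor {X : Type*} (dom : Set ℕ) (code : ℕ → Set X) (x : X) (φ : ℕ → ℕ) : Prop :=
  (∀ n, φ n ∈ dom) ∧ IsLocalBasis (code '' dom) (code '' Set.range φ) x

/-- An oracle for `x` is complete iff every code of a basis element containing `x`
appears in its range. -/
def IsCompleteOracleFor {X : Type*} (dom : Set ℕ) (code : ℕ → Set X) (x : X)
    (φ : ℕ → ℕ) : Prop :=
  IsOracleFor dom code x φ ∧ ∀ n ∈ dom, x ∈ code n → n ∈ Set.range φ

/-- The effective topology `(B, ν)` (with `B = code '' dom`) has a recursively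
enumerable subset relation. -/
def RESubsetRel {X : Type*} (dom : Set ℕ) (code : ℕ → Set X) : Prop :=
  REPred fun p : ℕ =>
    ∃ b₁ ∈ dom, ∃ b₂ ∈ dom, p = cantorPair b₁ b₂ ∧ code b₁ ⊆ code b₂

/-! Because the subset relation is r.e., one can dovetail over all triples `(k, b, t)` and output
`b` whenever `t` steps of a semi-decider confirm `ν(φ k) ⊆ ν(b)`, and `φ k` otherwise. The range of
the resulting oracle is exactly the set of codes of basic neighbourhoods of `x`: each of them
contains some `ν(φ k)`, since `φ` is an oracle, and conversely each `ν(b) ⊇ ν(φ k)` contains `x`. -/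

theorem cantorPair_eq (x y : ℕ) : cantorPair x y = (x + y) * (x + y + 1) / 2 + x := by
  have h : x * x + 2 * x * y + y * y + 3 * x + y = (x + y) * (x + y + 1) + x * 2 := by ring
  rw [cantorPair, h, Nat.add_mul_div_right _ _ two_pos]

theorem primrec₂_cantorPair : Primrec₂ cantorPair := by
  have hs : Primrec fun p : ℕ × ℕ => p.1 + p.2 := Primrec.nat_add.comp .fst .snd
  refine (Primrec.nat_add.comp (Primrec.nat_div.comp (Primrec.nat_mul.comp hs
    (Primrec.succ.comp hs)) (Primrec.const 2)) Primrec.fst).of_eq fun p => ?_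
  rw [cantorPair_eq]

theorem cantorPair_lt_of_add_lt {x y a b : ℕ} (h : x + y < a + b) :
    cantorPair x y < cantorPair a b := by
  rw [cantorPair_eq, cantorPair_eq]
  set s := x + y
  have step : (s + 1) * (s + 1 + 1) / 2 = s * (s + 1) / 2 + (s + 1) := by
    rw [show (s + 1) * (s + 1 + 1) = s * (s + 1) + (s + 1) * 2 by ring,
      Nat.add_mul_div_right _ _ two_pos]
  have mono : (s + 1) * (s + 1 + 1) / 2 ≤ (a + b) * (a + b + 1) / 2 :=
    Nat.div_le_div_right (Nat.mul_le_mul (by omega) (by omega))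
  omega

theorem cantorPair_injective : Function.Injective2 cantorPair := by
  intro x a y b h
  have hs : x + y = a + b := by
    rcases lt_trichotomy (x + y) (a + b) with hlt | heq | hgt
    · exact absurd h (cantorPair_lt_of_add_lt hlt).ne
    · exact heq
    · exact absurd h (cantorPair_lt_of_add_lt hgt).ne'
  rw [cantorPair_eq, cantorPair_eq, hs] at h
  omega

open Nat.Partrec Code in
theorem REPred.exists_primrec₂_witness {α : Type*} [Primcodable α] {p : α → Prop}
    (hp : REPred p) : ∃ s : α → ℕ → Bool, Primrec₂ s ∧ ∀ a, p a ↔ ∃ t, s a t = true := by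
  obtain ⟨c, hc⟩ := exists_code.mp hp
  have hdom : ∀ a, p a ↔ (eval c (Encodable.encode a)).Dom := fun a => by
    simp [hc, Encodable.encodek, Part.assert]
  refine ⟨fun a t => (evaln t c (Encodable.encode a)).isSome, ?_, fun a => ?_⟩
  · exact Primrec.option_isSome.comp (primrec_evaln.comp
      (((Primrec.snd.pair (Primrec.const c)).pair (Primrec.encode.comp Primrec.fst))))
  · simp only [hdom, Part.dom_iff_mem, evaln_complete, Option.isSome_iff_exists,
      Option.mem_def]
    exact ⟨fun ⟨v, t, h⟩ => ⟨t, v, h⟩, fun ⟨t, v, h⟩ => ⟨v, t, h⟩⟩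

theorem REPred.comp {α β : Type*} [Primcodable α] [Primcodable β] {p : β → Prop}
    (hp : REPred p) {f : α → β} (hf : Computable f) : REPred fun a => p (f a) :=
  Partrec.comp hp hf

theorem RESubsetRel.rePred_subset {X : Type*} {dom : Set ℕ} {code : ℕ → Set X}
    (h : RESubsetRel dom code) :
    REPred fun q : ℕ × ℕ => q.1 ∈ dom ∧ q.2 ∈ dom ∧ code q.1 ⊆ code q.2 := by
  refine (REPred.comp h primrec₂_cantorPair.to_comp).of_eq fun q => ⟨?_, ?_⟩
  · rintro ⟨b₁, hb₁, b₂, hb₂, heq, hsub⟩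
    obtain ⟨rfl, rfl⟩ := cantorPair_injective heq
    exact ⟨hb₁, hb₂, hsub⟩
  · rintro ⟨h₁, h₂, hsub⟩
    exact ⟨q.1, h₁, q.2, h₂, rfl, hsub⟩

namespace PartrecIn

theorem of_eq {F G : (ℕ →. ℕ) → ℕ →. ℕ} (hF : PartrecIn F) (h : ∀ O n, F O n = G O n) :
    PartrecIn G :=
  (funext fun O => funext (h O) : F = G) ▸ hF

theorem of_partrec {f : ℕ →. ℕ} (hf : Nat.Partrec f) : PartrecIn fun _ => f := by
  induction hf with
  | zero => exact .zero
  | succ => exact .succ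
  | left => exact .left
  | right => exact .right
  | pair _ _ ihf ihg => exact .pair ihf ihg
  | comp _ _ ihf ihg => exact .comp ihf ihg
  | prec _ _ ihf ihg => exact .prec ihf ihg
  | rfind _ ihf => exact .rfind ihf

theorem of_computable {f : ℕ → ℕ} (hf : Computable f) : PartrecIn fun _ => (f : ℕ →. ℕ) :=
  of_partrec (Partrec.nat_iff.mp hf.partrec)

theorem map_oracle_comp {f : ℕ → ℕ} {g : ℕ → ℕ → ℕ} (hf : Computable f)
    (hg : Computable₂ g) : PartrecIn fun O n => (O (f n)).map (g n) := by
  have hquery := PartrecIn.pair (of_computable Computable.id) (.comp .oracle (of_computable hf))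
  refine (PartrecIn.comp (of_computable (hg.comp (Computable.fst.comp Computable.unpair)
    (Computable.snd.comp Computable.unpair))) hquery).of_eq fun O n => ?_
  simp only [Seq.seq, PFun.coe_val, id, Part.map_eq_map, Part.map_some, Part.bind_some]
  -- `O : ℕ →. ℕ` is not reducibly a `ℕ → Part ℕ`, so the `>>=` lemmas do not fire on it.
  change (((Part.some (f n)).bind O).map (Nat.pair n)).bind
    (fun a => Part.some (g a.unpair.1 a.unpair.2)) = _
  rw [show (Part.some (f n)).bind O = O (f n) from Part.bind_some _ _, Part.bind_some_eq_map,
    Part.map_map]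
  simp [Function.comp_def]

end PartrecIn

/-- The complete oracle reads its argument `n` as a triple `⟨⟨k, b⟩, t⟩` and is given the answer
`a = φ k` of the original oracle: it outputs `b` if the semi-decider `s` accepts `(a, b)` within
`t` steps, and falls back to `a` otherwise. -/
def completionStep (s : ℕ × ℕ → ℕ → Bool) (n a : ℕ) : ℕ :=
  bif s (a, n.unpair.1.unpair.2) n.unpair.2 then n.unpair.1.unpair.2 else a

theorem primrec₂_completionStep {s : ℕ × ℕ → ℕ → Bool} (hs : Primrec₂ s) :
    Primrec₂ (completionStep s) := by
  have hb : Primrec fun n : ℕ => n.unpair.1.unpair.2 :=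
    Primrec.snd.comp (Primrec.unpair.comp (Primrec.fst.comp Primrec.unpair))
  have ht : Primrec fun n : ℕ => n.unpair.2 := Primrec.snd.comp Primrec.unpair
  exact Primrec.cond (hs.comp (Primrec.snd.pair (hb.comp Primrec.fst)) (ht.comp Primrec.fst))
    (hb.comp Primrec.fst) Primrec.snd

theorem range_completionStep {s : ℕ × ℕ → ℕ → Bool} {φ : ℕ → ℕ}
    (hrefl : ∀ k, ∃ t, s (φ k, φ k) t = true) :
    Set.range (fun n => completionStep s n (φ n.unpair.1.unpair.1)) =
      {b | ∃ k t, s (φ k, b) t = true} := by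
  ext b
  constructor
  · rintro ⟨n, rfl⟩
    cases h : s (φ n.unpair.1.unpair.1, n.unpair.1.unpair.2) n.unpair.2
    · simpa [completionStep, h] using ⟨_, hrefl _⟩
    · simpa [completionStep, h] using ⟨_, _, h⟩
  · rintro ⟨k, t, h⟩
    exact ⟨Nat.pair (Nat.pair k b) t, by simp [completionStep, h]⟩

section Oracle

variable {X : Type*} {dom : Set ℕ} {code : ℕ → Set X} {x : X}

theorem isCompleteOracleFor_iff_range_eq {ψ : ℕ → ℕ} :
    IsCompleteOracleFor dom code x ψ ↔ Set.range ψ = {n | n ∈ dom ∧ x ∈ code n} := by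
  constructor
  · rintro ⟨⟨hdom, -, hmem, -⟩, hcomplete⟩
    ext n
    constructor
    · rintro ⟨m, rfl⟩
      exact ⟨hdom m, hmem _ ⟨_, ⟨m, rfl⟩, rfl⟩⟩
    · exact fun ⟨hn, hx⟩ => hcomplete n hn hx
  · intro hrange
    have hψ : ∀ m, ψ m ∈ dom ∧ x ∈ code (ψ m) := fun m =>
      (Set.ext_iff.mp hrange (ψ m)).mp ⟨m, rfl⟩
    have hcomplete : ∀ n ∈ dom, x ∈ code n → n ∈ Set.range ψ := fun n hn hx =>
      hrange ▸ ⟨hn, hx⟩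
    refine ⟨⟨fun m => (hψ m).1, ?_, ?_, ?_⟩, hcomplete⟩
    · rintro _ ⟨_, ⟨m, rfl⟩, rfl⟩
      exact ⟨ψ m, (hψ m).1, rfl⟩
    · rintro _ ⟨_, ⟨m, rfl⟩, rfl⟩
      exact (hψ m).2
    · rintro _ ⟨n, hn, rfl⟩ hx
      exact ⟨code n, ⟨n, hcomplete n hn hx, rfl⟩, subset_rfl⟩

theorem IsOracleFor.setOf_mem_code_eq {φ : ℕ → ℕ} (hφ : IsOracleFor dom code x φ) :
    {n | n ∈ dom ∧ x ∈ code n} = {b | ∃ k, φ k ∈ dom ∧ b ∈ dom ∧ code (φ k) ⊆ code b} := by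
  obtain ⟨hdom, -, hmem, hbasis⟩ := hφ
  ext b
  constructor
  · rintro ⟨hb, hx⟩
    obtain ⟨_, ⟨_, ⟨k, rfl⟩, rfl⟩, hsub⟩ := hbasis _ ⟨b, hb, rfl⟩ hx
    exact ⟨k, hdom k, hb, hsub⟩
  · rintro ⟨k, -, hb, hsub⟩
    exact ⟨hb, hsub (hmem _ ⟨_, ⟨k, rfl⟩, rfl⟩)⟩

end Oracle

theorem complete_oracle_of_oracle_general {X : Type*}
    (dom : Set ℕ) (code : ℕ → Set X)
    (hre : RESubsetRel dom code) :
    ∃ F : (ℕ →. ℕ) → ℕ →. ℕ, PartrecIn F ∧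
      ∀ (x : X) (φ : ℕ → ℕ), IsOracleFor dom code x φ →
        ∃ ψ : ℕ → ℕ, (∀ n, F (fun k => Part.some (φ k)) n = Part.some (ψ n)) ∧
          IsCompleteOracleFor dom code x ψ := by
  obtain ⟨s, hs, hsubset⟩ := hre.rePred_subset.exists_primrec₂_witness
  have hk : Computable fun n : ℕ => n.unpair.1.unpair.1 :=
    (Primrec.fst.comp (Primrec.unpair.comp (Primrec.fst.comp Primrec.unpair))).to_comp
  refine ⟨fun O n => (O n.unpair.1.unpair.1).map (completionStep s n),
    .map_oracle_comp hk (primrec₂_completionStep hs).to_comp,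
    fun x φ hφ => ⟨_, fun n => Part.map_some _ _, ?_⟩⟩
  have hrefl : ∀ k, ∃ t, s (φ k, φ k) t = true := fun k =>
    (hsubset _).mp ⟨hφ.1 k, hφ.1 k, subset_rfl⟩
  rw [isCompleteOracleFor_iff_range_eq, range_completionStep hrefl, hφ.setOf_mem_code_eq]
  exact Set.ext fun b => exists_congr fun k => (hsubset (φ k, b)).symm

/-- Let `φ` be an oracle for a point `x` in an effective topology `(B, ν)`
with a recursively enumerable subset relation.  Then there exists a complete oracle `ψ`
for `x` in `(B, ν)` that is recursive relative to `φ`, uniformly in `φ`. -/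
theorem complete_oracle_of_oracle {X : Type*} [TopologicalSpace X] [T0Space X]
    (dom : Set ℕ) (code : ℕ → Set X)
    (hbasis : TopologicalSpace.IsTopologicalBasis (code '' dom))
    (hre : RESubsetRel dom code) :
    ∃ F : (ℕ →. ℕ) → ℕ →. ℕ, PartrecIn F ∧
      ∀ (x : X) (φ : ℕ → ℕ), IsOracleFor dom code x φ →
        ∃ ψ : ℕ → ℕ, (∀ n, F (fun k => Part.some (φ k)) n = Part.some (ψ n)) ∧
          IsCompleteOracleFor dom code x ψ :=
  complete_oracle_of_oracle_general dom code hre
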